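/- Let f be a non-negative measurable function on 𝒳 and X an 𝒳-valued random variable with m_f = E f(X) and Var(f(X)) ≤ v. Let α > 0, ε ≥ 0 and μ ∈ ℝ be such that r̄_f(μ) ≤ ε and 1 − α²v − 2αε ≥ 0. Then m_f ≤ μ + αv + 2ε. -/

import Mathlib

open MeasureTheory ProbabilityTheory Real

noncomputable section

/-- Catoni's truncation function `φ`. -/
def catoniPhi (x : ℝ) : ℝ :=
  if x < 0 then -Real.log (1 - x + x ^ 2 / 2) else Real.log (1 + x + x ^ 2 / 2)

/-- Catoni's empirical criterion `r̂_f(μ)` based on the sample `Xs`. -/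
def rhat {Ω 𝒳 : Type*} (n : ℕ) (α : ℝ) (Xs : Fin n → Ω → 𝒳)
    (f : 𝒳 → ℝ) (μ : ℝ) (ω : Ω) : ℝ :=
  (1 / (n * α)) * ∑ l, catoniPhi (α * (f (Xs l ω) - μ))

/-- The deterministic counterpart `r̄_f(μ)` of Catoni's criterion. -/
def rbar {Ω 𝒳 : Type*} [MeasurableSpace Ω] (P : Measure Ω)
    (α : ℝ) (X : Ω → 𝒳) (f : 𝒳 → ℝ) (μ : ℝ) : ℝ :=
  (1 / α) * ∫ ω, catoniPhi (α * (f (X ω) - μ)) ∂P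

/-!
Since `x - x²/2 ≤ φ(x)`, integrating gives the quadratic lower bound
`r̄_f(μ') ≥ (m_f - μ') - α (v + (m_f - μ')²) / 2`. At `μ' = μ` this bound is at most `ε`, which
forces `α (m_f - μ) ≤ α² v + 2 α ε` as long as `α (m_f - μ) ≤ 1`. The remaining case is excluded
because `r̄_f` is strictly decreasing (`φ` is strictly increasing) and the lower bound already
reaches `ε` at `μ' = m_f - 1/α > μ`.
-/

lemma catoniPhi_of_neg {x : ℝ} (hx : x < 0) : catoniPhi x = -Real.log (1 - x + x ^ 2 / 2) :=
  if_pos hx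

lemma catoniPhi_of_nonneg {x : ℝ} (hx : 0 ≤ x) : catoniPhi x = Real.log (1 + x + x ^ 2 / 2) :=
  if_neg hx.not_gt

lemma catoniPhi_strictMono : StrictMono catoniPhi := by
  intro a b hab
  rcases lt_or_ge b 0 with hb | hb
  · rw [catoniPhi_of_neg hb, catoniPhi_of_neg (hab.trans hb), neg_lt_neg_iff]
    exact Real.log_lt_log (by nlinarith) (by nlinarith)
  rcases lt_or_ge a 0 with ha | ha
  · rw [catoniPhi_of_neg ha, catoniPhi_of_nonneg hb]
    have : 0 < Real.log (1 - a + a ^ 2 / 2) := Real.log_pos (by nlinarith)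
    have : 0 ≤ Real.log (1 + b + b ^ 2 / 2) := Real.log_nonneg (by nlinarith)
    linarith
  · rw [catoniPhi_of_nonneg ha, catoniPhi_of_nonneg hb]
    exact Real.log_lt_log (by positivity) (by nlinarith)

lemma catoniPhi_neg (x : ℝ) : catoniPhi (-x) = -catoniPhi x := by
  rcases lt_trichotomy x 0 with hx | rfl | hx
  · rw [catoniPhi_of_neg hx, catoniPhi_of_nonneg (by linarith), neg_neg]
    ring_nf
  · simp [catoniPhi]
  · rw [catoniPhi_of_nonneg hx.le, catoniPhi_of_neg (by linarith)]
    ring_nf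

lemma abs_catoniPhi_le (x : ℝ) : |catoniPhi x| ≤ |x| := by
  wlog hx : 0 ≤ x generalizing x
  · simpa [catoniPhi_neg] using this (-x) (by linarith)
  rw [catoniPhi_of_nonneg hx, abs_of_nonneg hx,
    abs_of_nonneg (Real.log_nonneg (by nlinarith)), Real.log_le_iff_le_exp (by positivity)]
  exact Real.quadratic_le_exp_of_nonneg hx

lemma sub_sq_div_two_le_catoniPhi (x : ℝ) : x - x ^ 2 / 2 ≤ catoniPhi x := by
  rcases lt_or_ge x 0 with hx | hx
  · rw [catoniPhi_of_neg hx]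
    linarith [Real.log_le_sub_one_of_pos (show 0 < 1 - x + x ^ 2 / 2 by nlinarith)]
  · rw [catoniPhi_of_nonneg hx]
    have hq : 0 < 1 + x + x ^ 2 / 2 := by positivity
    refine le_trans ?_ (Real.one_sub_inv_le_log_of_pos hq)
    have : (1 + x + x ^ 2 / 2)⁻¹ ≤ 1 - x + x ^ 2 / 2 := by
      rw [inv_le_iff_one_le_mul₀' hq]
      nlinarith [pow_nonneg hx 4]
    linarith

section Integral

variable {Ω : Type*} [MeasurableSpace Ω] {P : Measure Ω}

lemma integrable_catoniPhi_comp {h : Ω → ℝ} (hh : Integrable h P) :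
    Integrable (fun ω => catoniPhi (h ω)) P :=
  hh.mono
    (catoniPhi_strictMono.monotone.measurable.comp_aemeasurable hh.aemeasurable).aestronglyMeasurable
    (ae_of_all _ fun ω => by simpa only [Real.norm_eq_abs] using abs_catoniPhi_le (h ω))

lemma integral_lt_integral_of_forall_lt [NeZero P] {f g : Ω → ℝ} (hf : Integrable f P)
    (hg : Integrable g P) (hlt : ∀ ω, f ω < g ω) : ∫ ω, f ω ∂P < ∫ ω, g ω ∂P := by
  have hsupp : Function.support (fun ω => g ω - f ω) = Set.univ :=
    Function.support_eq_univ fun ω => (sub_pos.2 (hlt ω)).ne'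
  rw [← sub_pos, ← integral_sub hg hf,
    integral_pos_iff_support_of_nonneg (fun ω => (sub_pos.2 (hlt ω)).le) (hg.sub hf), hsupp]
  exact pos_iff_ne_zero.2 (Measure.measure_univ_ne_zero.2 (NeZero.ne P))

lemma integral_sub_variance_le_integral_catoniPhi [IsProbabilityMeasure P] {h : Ω → ℝ}
    (hh : MemLp h 2 P) :
    P[h] - (variance h P + P[h] ^ 2) / 2 ≤ ∫ ω, catoniPhi (h ω) ∂P := by
  have hint : Integrable h P := hh.integrable one_le_two
  have hsq : Integrable (fun ω => h ω ^ 2 / 2) P := hh.integrable_sq.div_const 2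
  calc P[h] - (variance h P + P[h] ^ 2) / 2 = ∫ ω, (h ω - h ω ^ 2 / 2) ∂P := by
        rw [variance_eq_sub hh, integral_sub hint hsq, integral_div]
        simp only [Pi.pow_apply]
        ring
    _ ≤ ∫ ω, catoniPhi (h ω) ∂P :=
        integral_mono (hint.sub hsq) (integrable_catoniPhi_comp hint)
          fun ω => sub_sq_div_two_le_catoniPhi (h ω)

end Integral

section Rbar

variable {Ω 𝒳 : Type*} [MeasurableSpace Ω] {P : Measure Ω} [IsProbabilityMeasure P]
  {X : Ω → 𝒳} {f : 𝒳 → ℝ} {α : ℝ}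

lemma rbar_strictAnti (hα : 0 < α) (hf : Integrable (fun ω => f (X ω)) P) :
    StrictAnti (rbar P α X f) := by
  have hint (μ : ℝ) : Integrable (fun ω => catoniPhi (α * (f (X ω) - μ))) P :=
    integrable_catoniPhi_comp ((hf.sub (integrable_const μ)).const_mul α)
  intro μ μ' hμ
  refine mul_lt_mul_of_pos_left (integral_lt_integral_of_forall_lt (hint μ') (hint μ) fun ω => ?_)
    (by positivity)
  exact catoniPhi_strictMono (by gcongr)

lemma sub_sub_mul_variance_le_rbar (hα : 0 < α)
    (hf : MemLp (fun ω => f (X ω)) 2 P) (μ : ℝ) :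
    (P[fun ω => f (X ω)] - μ)
      - α * (variance (fun ω => f (X ω)) P + (P[fun ω => f (X ω)] - μ) ^ 2) / 2
      ≤ rbar P α X f μ := by
  have hh : MemLp (fun ω => α * (f (X ω) - μ)) 2 P := (hf.sub (memLp_const μ)).const_mul α
  have key := integral_sub_variance_le_integral_catoniPhi hh
  rw [integral_const_mul, integral_sub (hf.integrable one_le_two) (integrable_const μ),
    variance_const_mul, variance_sub_const hf.aestronglyMeasurable] at key
  simp only [integral_const, probReal_univ, one_smul] at key
  rw [rbar, one_div, le_inv_mul_iff₀ hα]
  linarith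

end Rbar

theorem stmt_4_general {Ω 𝒳 : Type*} [MeasurableSpace Ω] [MeasurableSpace 𝒳]
    (P : Measure Ω) [IsProbabilityMeasure P]
    (X : Ω → 𝒳)
    (f : 𝒳 → ℝ)
    (hfL2 : MemLp (fun ω => f (X ω)) 2 P)
    (v : ℝ) (hv : variance (fun ω => f (X ω)) P ≤ v)
    (α : ℝ) (hα : 0 < α) (ε : ℝ) (hε : 0 ≤ ε) (μ : ℝ)
    (hrb : rbar P α X f μ ≤ ε) (hcond : 0 ≤ 1 - α ^ 2 * v - 2 * α * ε) :
    (∫ ω, f (X ω) ∂P) ≤ μ + α * v + 2 * ε := by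
  set m := ∫ ω, f (X ω) ∂P
  have hv0 : 0 ≤ v := (variance_nonneg _ _).trans hv
  have hlower (μ' : ℝ) : (m - μ') - α * (v + (m - μ') ^ 2) / 2 ≤ rbar P α X f μ' :=
    le_trans (by gcongr) (sub_sub_mul_variance_le_rbar hα hfL2 μ')
  have hdev : α * (m - μ) ≤ 1 := by
    by_contra! hdev
    have hμ : μ < m - α⁻¹ := by
      have : α⁻¹ < m - μ := (inv_lt_iff_one_lt_mul₀' hα).2 hdev
      linarith
    -- The lower bound `t ↦ t - α (v + t²) / 2` peaks at `t = α⁻¹`, with value `(1 - α²v) / (2α) ≥ ε`.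
    have hpeak : ε ≤ rbar P α X f (m - α⁻¹) := by
      refine le_trans ?_ (hlower (m - α⁻¹))
      rw [sub_sub_cancel]
      field_simp
      linarith
    exact (rbar_strictAnti hα (hfL2.integrable one_le_two) hμ).not_ge (hrb.trans hpeak)
  have hquad : 2 * (α * (m - μ)) - (α * (m - μ)) ^ 2 ≤ α ^ 2 * v + 2 * α * ε := by
    have := mul_le_mul_of_nonneg_left ((hlower μ).trans hrb) (by positivity : (0 : ℝ) ≤ 2 * α)
    linarith
  have hscaled : α * (m - μ) ≤ α * (α * v + 2 * ε) := by
    nlinarith [mul_nonneg hv0 (sq_nonneg α), mul_nonneg hα.le hε]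
  linarith [le_of_mul_le_mul_left hscaled hα]

/-- Lemma 3.1 (third part): if `r̄_f(μ) ≤ ε` and `1 - α²v - 2αε ≥ 0`, then
`m_f ≤ μ + αv + 2ε`. -/
theorem stmt_4 {Ω 𝒳 : Type*} [MeasurableSpace Ω] [MeasurableSpace 𝒳]
    (P : Measure Ω) [IsProbabilityMeasure P]
    (X : Ω → 𝒳) (hX : Measurable X)
    (f : 𝒳 → ℝ) (hfm : Measurable f) (hf0 : ∀ x, 0 ≤ f x)
    (hfL2 : MemLp (fun ω => f (X ω)) 2 P)
    (v : ℝ) (hv : variance (fun ω => f (X ω)) P ≤ v)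
    (α : ℝ) (hα : 0 < α) (ε : ℝ) (hε : 0 ≤ ε) (μ : ℝ)
    (hrb : rbar P α X f μ ≤ ε) (hcond : 0 ≤ 1 - α ^ 2 * v - 2 * α * ε) :
    (∫ ω, f (X ω) ∂P) ≤ μ + α * v + 2 * ε :=
  stmt_4_general P X f hfL2 v hv α hα ε hε μ hrb hcond
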